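/- For any n ≥ 2 and any partition [n] = D ⊔ U with 1, n ∈ D, and for any real values w_δ and z_{[n]}, the Minkowski coefficient of I = [n] satisfies y_{[n]} = (−1)^{|[n] ∖ R_{δ_1}|} · ( z_{R_{δ_1}} − z_{R_{δ_2}} − z_{R_{δ_3}} + z_{R_{δ_4}} ), where δ_1 = {0, n+1}, δ_2 = {0, n}, δ_3 = {1, n+1}, δ_4 = {1, n}, and R and z are extended to non-proper diagonals as described. -/

import Mathlib

/-!
Exchanging the two sums in `y_{[n]} = ∑_J (-1)^{|[n] ∖ J|} z^c_J`, the sets `J` having a fixed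
nested set `K` as a component form an interval of the Boolean lattice, so the alternating sum
over them vanishes unless that interval is a point. What survives are the nested sets whose
window `[a(K), b(K)]` covers `[n]`, that is `K = (D ∩ (a, b)) ∪ S` with `a ∈ {0, 1}`,
`b ∈ {n, n + 1}` and `S ⊆ U` arbitrary. The diagonals associated to such a `K` join consecutive
points of `{a} ∪ S ∪ {b}`. In the signed sum over the four windows `(a, b)` every diagonal other
than `{a, b}` involves at most one of `a`, `b` and cancels, and `{a, b}` occurs only for `S = ∅`;
together with the constant terms it contributes `z_{R_δ}` for `δ = {a, b}`.
-/

open Finset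

attribute [local instance] Classical.propDecidable

namespace AssocPaper

/-- `x` and `y` are consecutive elements of the finite set `S`. -/
def ConsecIn (S : Finset ℕ) (x y : ℕ) : Prop :=
  x ∈ S ∧ y ∈ S ∧ x < y ∧ ∀ z ∈ S, ¬ (x < z ∧ z < y)

/-- `D̄ = D ∪ {0, n+1}`. -/
def Dbar (n : ℕ) (D : Finset ℕ) : Finset ℕ := insert 0 (insert (n + 1) D)

/-- The boundary edges of the `c`-labeled `(n+2)`-gon, given by endpoints `x < y`:
pairs of consecutive elements of `D̄`; if `U ≠ ∅` also `{0, min U}`, `{max U, n+1}` and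
pairs of consecutive elements of `U`; if `U = ∅` also `{0, n+1}`. -/
def IsBoundary (n : ℕ) (D U : Finset ℕ) (x y : ℕ) : Prop :=
  ConsecIn (Dbar n D) x y
    ∨ (U.Nonempty ∧
        ((x = 0 ∧ y ∈ U ∧ ∀ u ∈ U, y ≤ u)
          ∨ (y = n + 1 ∧ x ∈ U ∧ ∀ u ∈ U, u ≤ x)
          ∨ ConsecIn U x y))
    ∨ (U = ∅ ∧ x = 0 ∧ y = n + 1)

/-- `{x, y}` (with `x < y ≤ n+1`) is a proper diagonal: a diagonal of the
`(n+2)`-gon which is not a boundary edge. -/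
def IsProper (n : ℕ) (D U : Finset ℕ) (x y : ℕ) : Prop :=
  x < y ∧ y ≤ n + 1 ∧ ¬ IsBoundary n D U x y

/-- The set `R_δ` for a proper diagonal `δ = {x,y}` with `x < y`. -/
noncomputable def Rdiag (n : ℕ) (D U : Finset ℕ) (x y : ℕ) : Finset ℕ :=
  if x ∈ U then
    (if y ∈ U then (D ∪ U.filter fun u => u ≤ x) ∪ U.filter fun u => y ≤ u
     else D.filter (fun d => d < y) ∪ U.filter fun u => u ≤ x)
  else
    (if y ∈ U then D.filter (fun d => x < d) ∪ U.filter fun u => y ≤ u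
     else D.filter fun d => x < d ∧ d < y)

/-- The extension of `R` to non-proper and degenerate diagonals `δ = {x,y}`, `x ≤ y`:
`R_δ = [n]` if `U = ∅` and `δ = {0,n+1}`; for other non-proper or degenerate `δ`,
`R_δ = ∅` if `x,y ∈ D̄` and `R_δ = [n]` otherwise. -/
noncomputable def Rext (n : ℕ) (D U : Finset ℕ) (x y : ℕ) : Finset ℕ :=
  if IsProper n D U x y then Rdiag n D U x y
  else if U = ∅ ∧ x = 0 ∧ y = n + 1 then Finset.Icc 1 n
  else if x ∈ U ∨ y ∈ U then Finset.Icc 1 n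
  else ∅

/-- The extension of the right-hand sides `z_{R_δ}` to non-proper and degenerate
diagonals, given the values `w` on proper diagonals and the value `zn = z_{[n]}`. -/
noncomputable def zext (n : ℕ) (D U : Finset ℕ) (w : ℕ × ℕ → ℝ) (zn : ℝ) (x y : ℕ) : ℝ :=
  if IsProper n D U x y then w (x, y)
  else if U = ∅ ∧ x = 0 ∧ y = n + 1 then zn
  else if x ∈ U ∨ y ∈ U then zn
  else 0

/-- `a(I)`: the largest element of `D ∪ {0}` smaller than `min I`. -/
noncomputable def aI (D I : Finset ℕ) : ℕ :=
  ((insert 0 D).filter fun e => ∀ i ∈ I, e < i).sup id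

/-- `b(I)`: the smallest element of `D ∪ {n+1}` larger than `max I`. -/
noncomputable def bI (n : ℕ) (D I : Finset ℕ) : ℕ :=
  sInf {e : ℕ | e ∈ insert (n + 1) D ∧ ∀ i ∈ I, i < e}

/-- The minimum element `γ` of `I` (junk value for `I = ∅`). -/
noncomputable def minEl (I : Finset ℕ) : ℕ := sInf {i : ℕ | i ∈ I}

/-- The maximum element `Γ` of `I` (junk value `0` for `I = ∅`). -/
noncomputable def maxEl (I : Finset ℕ) : ℕ := I.sup id

/-- A nonempty `I ⊆ [n]` is nested if every `d ∈ D` with `a(I) < d < b(I)` lies in `I`. -/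
def IsNested (n : ℕ) (D I : Finset ℕ) : Prop :=
  I.Nonempty ∧ I ⊆ Finset.Icc 1 n ∧
    ∀ d ∈ D, aI D I < d → d < bI n D I → d ∈ I

/-- The nested components of `I`: the inclusion-maximal nested subsets of `I`. -/
noncomputable def nestedComponents (n : ℕ) (D I : Finset ℕ) : Finset (Finset ℕ) :=
  I.powerset.filter fun J =>
    IsNested n D J ∧ ∀ K ∈ I.powerset, IsNested n D K → J ⊆ K → J = K

/-- `v(I)`: the number of nested components of `I`. -/
noncomputable def vI (n : ℕ) (D I : Finset ℕ) : ℕ := (nestedComponents n D I).card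

/-- `x` is the last element of one of the up intervals of `J`
(an element of `J ∩ U` whose successor in `U`, if any, is not in `J`). -/
def IsRunEnd (U J : Finset ℕ) (x : ℕ) : Prop :=
  x ∈ J ∧ x ∈ U ∧ ∀ y, ConsecIn U x y → y ∉ J

/-- `y` is the first element of one of the up intervals of `J`
(an element of `J ∩ U` whose predecessor in `U`, if any, is not in `J`). -/
def IsRunStart (U J : Finset ℕ) (y : ℕ) : Prop :=
  y ∈ J ∧ y ∈ U ∧ ∀ x, ConsecIn U x y → x ∉ J

/-- `{x,y}` is one of the diagonals `δ_1(J), …, δ_{w+1}(J)` associated to a nested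
set `J` with `a = a(J)`, `b = b(J)` and up intervals `[α_1,β_1]_U, …, [α_w,β_w]_U`,
namely `{a,α_1}, {β_1,α_2}, …, {β_w,b}` (and `{a,b}` when `w = 0`). -/
def AssocDiag (n : ℕ) (D U J : Finset ℕ) (x y : ℕ) : Prop :=
  x < y ∧ (x = aI D J ∨ IsRunEnd U J x) ∧ (y = bI n D J ∨ IsRunStart U J y) ∧
    ∀ u ∈ J ∩ U, ¬ (x < u ∧ u < y)

/-- `W(J)`: the proper diagonals among the diagonals associated to the nested set `J`. -/
noncomputable def WJ (n : ℕ) (D U J : Finset ℕ) : Finset (ℕ × ℕ) :=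
  (Finset.range (n + 2) ×ˢ Finset.range (n + 2)).filter fun p =>
    AssocDiag n D U J p.1 p.2 ∧ IsProper n D U p.1 p.2

/-- The tight value `z^c_I = ∑_i ( ∑_{j ∈ W(J_i)} w_{δ_j(J_i)} − (|W(J_i)|−1)·z_{[n]} )`,
the sum running over the nested components `J_i` of `I` (so `z^c_∅ = 0`). -/
noncomputable def zc (n : ℕ) (D U : Finset ℕ) (w : ℕ × ℕ → ℝ) (zn : ℝ) (I : Finset ℕ) : ℝ :=
  ∑ J ∈ nestedComponents n D I,
    ((∑ p ∈ WJ n D U J, w p) - (((WJ n D U J).card : ℝ) - 1) * zn)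

/-- The Minkowski coefficient `y_I = ∑_{J ⊆ I} (−1)^{|I∖J|} z^c_J`. -/
noncomputable def yI (n : ℕ) (D U : Finset ℕ) (w : ℕ × ℕ → ℝ) (zn : ℝ) (I : Finset ℕ) : ℝ :=
  ∑ J ∈ I.powerset, (-1 : ℝ) ^ (I \ J).card * zc n D U w zn J

/-- The associahedron right-hand sides `w_δ = |R_δ|·(|R_δ|+1)/2`. -/
noncomputable def wAs (n : ℕ) (D U : Finset ℕ) (p : ℕ × ℕ) : ℝ :=
  (((Rdiag n D U p.1 p.2).card : ℝ) * (((Rdiag n D U p.1 p.2).card : ℝ) + 1)) / 2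

/-- The associahedron value `z_{[n]} = n(n+1)/2`. -/
noncomputable def znAs (n : ℕ) : ℝ := ((n : ℝ) * ((n : ℝ) + 1)) / 2

end AssocPaper

namespace Finset

theorem neg_one_pow_card_sdiff {R α : Type*} [Monoid R] [HasDistribNeg R] [DecidableEq α]
    {s t : Finset α} (h : s ⊆ t) : (-1 : R) ^ #(t \ s) = (-1) ^ #t * (-1) ^ #s := by
  rw [← card_sdiff_add_card_eq_card h, pow_add, mul_assoc, ← pow_add, ← two_mul, pow_mul,
    neg_one_sq, one_pow, mul_one]

theorem sum_powerset_neg_one_pow_card' {R α : Type*} [Ring R] [DecidableEq α] (s : Finset α) :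
    ∑ t ∈ s.powerset, (-1 : R) ^ #t = if s = ∅ then 1 else 0 := by
  have h := congrArg (Int.cast : ℤ → R) (sum_powerset_neg_one_pow_card (x := s))
  push_cast at h
  exact h

theorem sum_Icc_neg_one_pow_card_sdiff {R α : Type*} [Ring R] [DecidableEq α]
    {N s t : Finset α} (hst : s ⊆ t) (htN : t ⊆ N) :
    ∑ u ∈ Icc s t, (-1 : R) ^ #(N \ u) = if s = t then (-1) ^ #(N \ s) else 0 := by
  have hinj : Set.InjOn (s ∪ ·) ((t \ s).powerset : Set (Finset α)) := by
    intro v hv v' hv' hvv'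
    simp only [coe_powerset, Set.mem_preimage, Set.mem_powerset_iff, coe_subset] at hv hv'
    rw [← union_sdiff_cancel_left (disjoint_of_subset_right hv disjoint_sdiff),
      ← union_sdiff_cancel_left (disjoint_of_subset_right hv' disjoint_sdiff)]
    exact congrArg (· \ s) hvv'
  have hsign : ∀ v ∈ (t \ s).powerset,
      (-1 : R) ^ #(N \ (s ∪ v)) = (-1) ^ #(N \ s) * (-1) ^ #v := by
    intro v hv
    rw [show N \ (s ∪ v) = (N \ s) \ v from sdiff_sdiff_left.symm]
    exact neg_one_pow_card_sdiff (fun x hx => mem_sdiff.2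
      ⟨htN (sdiff_subset (mem_powerset.1 hv hx)), (mem_sdiff.1 (mem_powerset.1 hv hx)).2⟩)
  rw [Icc_eq_image_powerset hst, sum_image hinj, sum_congr rfl hsign, ← mul_sum,
    sum_powerset_neg_one_pow_card']
  by_cases h : s = t
  · simp [h]
  · have hts : ¬t ⊆ s := fun hts => h (hst.antisymm hts)
    simp [h, sdiff_eq_empty_iff_subset, hts]

theorem eq_sdiff_sdiff_iff {α : Type*} [DecidableEq α] {K N W : Finset α} (hKN : K ⊆ N)
    (hKW : K ⊆ W) : K = N \ (W \ K) ↔ N ⊆ W := by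
  simp only [Finset.ext_iff, subset_iff, mem_sdiff]
  exact ⟨fun h x hx => by have := h x; have := @hKW x; tauto,
    fun h x => by have := @hKN x; have := @h x; tauto⟩

theorem sum_mul_ite_or_of_sum_eq_zero {R ι : Type*} [Semiring R] {s : Finset ι} {f : ι → R}
    (hf : ∑ i ∈ s, f i = 0) (P : Prop) [Decidable P] (Q : ι → Prop) [DecidablePred Q] (x : R) :
    ∑ i ∈ s, f i * (if P ∨ Q i then x else 0) =
      if P then 0 else ∑ i ∈ s, f i * (if Q i then x else 0) := by
  by_cases hP : P
  · simp [hP, ← sum_mul, hf]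
  · simp [hP]

theorem sum_mul_ite_eq_or_of_sum_eq_zero {R ι : Type*} [Semiring R] [DecidableEq ι]
    {s : Finset ι} {f : ι → R} (hf : ∑ i ∈ s, f i = 0) {y : ι} {P : Prop} [Decidable P]
    (hP : P → y ∉ s) :
    ∑ i ∈ s, f i * (if y = i ∨ P then 1 else 0) = if y ∈ s then f y else 0 := by
  simp_rw [or_comm (a := y = _)]
  rw [sum_mul_ite_or_of_sum_eq_zero hf]
  by_cases hPy : P
  · simp [hPy, hP hPy]
  · simp [hPy]

end Finset

namespace AssocPaper

section Window

variable {n : ℕ} {D I : Finset ℕ}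

theorem aI_mem_filter (hI : I ⊆ Icc 1 n) :
    aI D I ∈ (insert 0 D).filter fun e => ∀ i ∈ I, e < i := by
  have h0 : 0 ∈ (insert 0 D).filter fun e => ∀ i ∈ I, e < i :=
    mem_filter.2 ⟨mem_insert_self 0 D, fun i hi => (mem_Icc.1 (hI hi)).1⟩
  obtain ⟨e, he, hsup⟩ := exists_mem_eq_sup _ ⟨0, h0⟩ id
  rw [aI, hsup]
  exact he

theorem aI_mem (hI : I ⊆ Icc 1 n) : aI D I ∈ insert 0 D :=
  (mem_filter.1 (aI_mem_filter hI)).1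

theorem aI_lt (hI : I ⊆ Icc 1 n) {i : ℕ} (hi : i ∈ I) : aI D I < i :=
  (mem_filter.1 (aI_mem_filter hI)).2 i hi

theorem le_aI {e : ℕ} (he : e ∈ insert 0 D) (h : ∀ i ∈ I, e < i) : e ≤ aI D I :=
  le_sup (f := id) (mem_filter.2 ⟨he, h⟩)

theorem bI_mem_and_lt (hI : I ⊆ Icc 1 n) :
    bI n D I ∈ insert (n + 1) D ∧ ∀ i ∈ I, i < bI n D I := by
  have h : n + 1 ∈ {e : ℕ | e ∈ insert (n + 1) D ∧ ∀ i ∈ I, i < e} :=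
    ⟨mem_insert_self _ _, fun i hi => Nat.lt_succ_of_le (mem_Icc.1 (hI hi)).2⟩
  exact Nat.sInf_mem ⟨_, h⟩

theorem bI_mem (hI : I ⊆ Icc 1 n) : bI n D I ∈ insert (n + 1) D :=
  (bI_mem_and_lt hI).1

theorem lt_bI (hI : I ⊆ Icc 1 n) {i : ℕ} (hi : i ∈ I) : i < bI n D I :=
  (bI_mem_and_lt hI).2 i hi

theorem bI_le {e : ℕ} (he : e ∈ insert (n + 1) D) (h : ∀ i ∈ I, i < e) : bI n D I ≤ e :=
  Nat.sInf_le ⟨he, h⟩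

theorem exists_le_of_aI_lt {d : ℕ} (hd : d ∈ D) (h : aI D I < d) : ∃ i ∈ I, i ≤ d := by
  by_contra! hI
  exact (le_aI (mem_insert_of_mem hd) hI).not_gt h

theorem exists_ge_of_lt_bI {d : ℕ} (hd : d ∈ D) (h : d < bI n D I) : ∃ i ∈ I, d ≤ i := by
  by_contra! hI
  exact (bI_le (mem_insert_of_mem hd) hI).not_gt h

theorem aI_eq_of {a b : ℕ} (ha : a ∈ insert 0 D) (hI : I ⊆ Icc 1 n) (hne : I.Nonempty)
    (hbounds : ∀ i ∈ I, a < i ∧ i < b) (hfill : ∀ d ∈ D, a < d → d < b → d ∈ I) :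
    aI D I = a := by
  obtain ⟨k, hk⟩ := hne
  refine ((le_aI ha fun i hi => (hbounds i hi).1).eq_or_lt.resolve_right fun hlt => ?_).symm
  have haD : aI D I ∈ D := (mem_insert.1 (aI_mem hI)).resolve_left (by omega)
  exact (aI_lt hI (hfill _ haD hlt ((aI_lt hI hk).trans (hbounds k hk).2))).false

theorem bI_eq_of {a b : ℕ} (hb : b ∈ insert (n + 1) D) (hbn : b ≤ n + 1) (hI : I ⊆ Icc 1 n)
    (hne : I.Nonempty) (hbounds : ∀ i ∈ I, a < i ∧ i < b)
    (hfill : ∀ d ∈ D, a < d → d < b → d ∈ I) : bI n D I = b := by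
  obtain ⟨k, hk⟩ := hne
  refine (bI_le hb fun i hi => (hbounds i hi).2).eq_or_lt.resolve_right fun hlt => ?_
  have hbD : bI n D I ∈ D := (mem_insert.1 (bI_mem hI)).resolve_left (by omega)
  exact (lt_bI hI (hfill _ hbD ((hbounds k hk).1.trans (lt_bI hI hk)) hlt)).false

end Window

section Components

variable {n : ℕ} {D J K : Finset ℕ}

theorem isNested_insert (hK : IsNested n D K) {u : ℕ} (hu : u ∈ Icc 1 n) (ha : aI D K ≤ u)
    (hb : u ≤ bI n D K) : IsNested n D (insert u K) := by
  obtain ⟨hne, hKn, hfill⟩ := hK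
  have hK' : insert u K ⊆ Icc 1 n := insert_subset hu hKn
  refine ⟨insert_nonempty u K, hK', fun d hd hda hdb => ?_⟩
  rcases eq_or_ne d u with rfl | hdu
  · exact mem_insert_self d K
  obtain ⟨i, hi, hid⟩ := exists_le_of_aI_lt hd hda
  obtain ⟨j, hj, hdj⟩ := exists_ge_of_lt_bI hd hdb
  have hlo : aI D K < d := by
    rcases mem_insert.1 hi with rfl | hi
    · omega
    · exact (aI_lt hKn hi).trans_le hid
  have hhi : d < bI n D K := by
    rcases mem_insert.1 hj with rfl | hj
    · omega
    · exact hdj.trans_lt (lt_bI hKn hj)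
  exact mem_insert_of_mem (hfill d hd hlo hhi)

theorem mem_nestedComponents_iff (hJ : J ⊆ Icc 1 n) :
    K ∈ nestedComponents n D J ↔
      IsNested n D K ∧ K ⊆ J ∧ ∀ j ∈ J, aI D K ≤ j → j ≤ bI n D K → j ∈ K := by
  simp only [nestedComponents, mem_filter, mem_powerset]
  constructor
  · rintro ⟨hKJ, hK, hmax⟩
    refine ⟨hK, hKJ, fun j hj ha hb => ?_⟩
    rw [hmax _ (insert_subset hj hKJ) (isNested_insert hK (hJ hj) ha hb) (subset_insert j K)]
    exact mem_insert_self j K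
  · rintro ⟨hK, hKJ, hfill⟩
    refine ⟨hKJ, hK, fun K' hK'J hK' hKK' => hKK'.antisymm fun e he => ?_⟩
    obtain ⟨hne, hKn, -⟩ := hK
    obtain ⟨k, hk⟩ := hne
    have hK'n := hK'.2.1
    have hab : aI D K < bI n D K := (aI_lt hKn hk).trans (lt_bI hKn hk)
    -- Otherwise `a(K)` or `b(K)` lies in `K' ⊆ J` and in the window of `K`, hence in `K`.
    refine hfill e (hK'J he) (not_lt.1 fun hea => ?_) (not_lt.1 fun hbe => ?_)
    · have haD : aI D K ∈ D := (mem_insert.1 (aI_mem hKn)).resolve_left (by omega)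
      have haK' : aI D K ∈ K' := hK'.2.2 _ haD ((aI_lt hK'n he).trans hea)
        ((aI_lt hKn hk).trans (lt_bI hK'n (hKK' hk)))
      exact (aI_lt hKn (hfill _ (hK'J haK') le_rfl hab.le)).false
    · have hbn : bI n D K ≤ n := hbe.le.trans (mem_Icc.1 (hK'n he)).2
      have hbD : bI n D K ∈ D := (mem_insert.1 (bI_mem hKn)).resolve_left (by omega)
      have hbK' : bI n D K ∈ K' := hK'.2.2 _ hbD ((aI_lt hK'n (hKK' hk)).trans (lt_bI hKn hk))
        (hbe.trans (lt_bI hK'n he))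
      exact (lt_bI hKn (hfill _ (hK'J hbK') hab.le le_rfl)).false

theorem filter_mem_nestedComponents (hK : IsNested n D K) :
    {J ∈ (Icc 1 n).powerset | K ∈ nestedComponents n D J} =
      Icc K (Icc 1 n \ (Icc (aI D K) (bI n D K) \ K)) := by
  ext J
  simp only [mem_filter, mem_powerset, Finset.mem_Icc]
  constructor
  · rintro ⟨hJ, hKJ⟩
    obtain ⟨-, hKJ, hfill⟩ := (mem_nestedComponents_iff hJ).1 hKJ
    refine ⟨hKJ, fun j hj => mem_sdiff.2 ⟨hJ hj, fun hj' => ?_⟩⟩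
    obtain ⟨hjab, hjK⟩ := mem_sdiff.1 hj'
    exact hjK (hfill j hj (mem_Icc.1 hjab).1 (mem_Icc.1 hjab).2)
  · rintro ⟨hKJ, hJ⟩
    have hJn : J ⊆ Icc 1 n := hJ.trans sdiff_subset
    refine ⟨hJn, (mem_nestedComponents_iff hJn).2 ⟨hK, hKJ, fun j hj ha hb => ?_⟩⟩
    by_contra hjK
    exact (mem_sdiff.1 (hJ hj)).2 (mem_sdiff.2 ⟨mem_Icc.2 ⟨ha, hb⟩, hjK⟩)

theorem sum_neg_one_pow_of_mem_nestedComponents :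
    ∑ J ∈ (Icc 1 n).powerset,
        (if K ∈ nestedComponents n D J then (-1 : ℝ) ^ #(Icc 1 n \ J) else 0) =
      if IsNested n D K ∧ Icc 1 n ⊆ Icc (aI D K) (bI n D K)
        then (-1 : ℝ) ^ #(Icc 1 n \ K) else 0 := by
  rw [← sum_filter]
  by_cases hK : IsNested n D K
  · have hKn := hK.2.1
    have hKab : K ⊆ Icc (aI D K) (bI n D K) := fun k hk =>
      mem_Icc.2 ⟨(aI_lt hKn hk).le, (lt_bI hKn hk).le⟩
    have hsub : K ⊆ Icc 1 n \ (Icc (aI D K) (bI n D K) \ K) := fun k hk =>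
      mem_sdiff.2 ⟨hKn hk, fun h => (mem_sdiff.1 h).2 hk⟩
    rw [filter_mem_nestedComponents hK, sum_Icc_neg_one_pow_card_sdiff hsub sdiff_subset]
    simp only [eq_sdiff_sdiff_iff hKn hKab, hK, true_and]
  · rw [filter_false_of_mem fun J hJ hKJ =>
      hK ((mem_nestedComponents_iff (mem_powerset.1 hJ)).1 hKJ).1]
    simp [hK]

end Components

noncomputable def componentValue (n : ℕ) (D U : Finset ℕ) (w : ℕ × ℕ → ℝ) (zn : ℝ)
    (J : Finset ℕ) : ℝ :=
  (∑ p ∈ WJ n D U J, w p) - ((#(WJ n D U J) : ℝ) - 1) * zn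

theorem componentValue_eq (n : ℕ) (D U : Finset ℕ) (w : ℕ × ℕ → ℝ) (zn : ℝ) (J : Finset ℕ) :
    componentValue n D U w zn J =
      zn + ∑ p ∈ range (n + 2) ×ˢ range (n + 2), if p ∈ WJ n D U J then w p - zn else 0 := by
  have hW : WJ n D U J ⊆ range (n + 2) ×ˢ range (n + 2) := filter_subset _ _
  rw [componentValue, ← sum_filter, filter_mem_eq_inter, inter_eq_right.2 hW, sum_sub_distrib,
    sum_const, nsmul_eq_mul]
  ring

theorem yI_eq_sum_window (n : ℕ) (D U : Finset ℕ) (w : ℕ × ℕ → ℝ) (zn : ℝ) :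
    yI n D U w zn (Icc 1 n) =
      ∑ K ∈ (Icc 1 n).powerset with IsNested n D K ∧ Icc 1 n ⊆ Icc (aI D K) (bI n D K),
        (-1 : ℝ) ^ #(Icc 1 n \ K) * componentValue n D U w zn K := by
  have hcomp : ∀ J ∈ (Icc 1 n).powerset, zc n D U w zn J =
      ∑ K ∈ (Icc 1 n).powerset,
        if K ∈ nestedComponents n D J then componentValue n D U w zn K else 0 := by
    intro J hJ
    rw [sum_ite_mem, inter_eq_right.2 fun K hK => ?_]
    · rfl
    exact mem_powerset.2 ((mem_powerset.1 (mem_filter.1 hK).1).trans (mem_powerset.1 hJ))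
  rw [yI, sum_congr rfl fun J hJ => by rw [hcomp J hJ, mul_sum], sum_comm, sum_filter]
  refine sum_congr rfl fun K _ => ?_
  trans (∑ J ∈ (Icc 1 n).powerset,
    if K ∈ nestedComponents n D J then (-1 : ℝ) ^ #(Icc 1 n \ J) else 0) *
      componentValue n D U w zn K
  · rw [sum_mul]
    exact sum_congr rfl fun J _ => by split_ifs <;> simp
  · rw [sum_neg_one_pow_of_mem_nestedComponents]
    split_ifs <;> simp

section Diagonals

variable {n : ℕ} {D U J : Finset ℕ}

theorem isRunEnd_of (hJ : J ⊆ Icc 1 n) {x y : ℕ} (hx : x ∈ J ∩ U) (hxy : IsProper n D U x y)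
    (hy : y = bI n D J ∨ y ∈ J ∩ U) (hgap : ∀ u ∈ J ∩ U, ¬(x < u ∧ u < y)) :
    IsRunEnd U J x := by
  obtain ⟨hxJ, hxU⟩ := mem_inter.1 hx
  refine ⟨hxJ, hxU, fun y' hcons hy'J => ?_⟩
  obtain ⟨-, hy'U, hxy', hnone⟩ := hcons
  have hyy' : y ≤ y' := not_lt.1 fun h => hgap y' (mem_inter.2 ⟨hy'J, hy'U⟩) ⟨hxy', h⟩
  rcases hy with rfl | hy
  · exact (lt_bI hJ hy'J).not_ge hyy'
  · have hyU := (mem_inter.1 hy).2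
    obtain rfl : y = y' := hyy'.eq_or_lt.resolve_right fun h => hnone y hyU ⟨hxy.1, h⟩
    exact hxy.2.2 (Or.inr (Or.inl ⟨⟨x, hxU⟩, Or.inr (Or.inr ⟨hxU, hyU, hxy', hnone⟩)⟩))

theorem isRunStart_of (hJ : J ⊆ Icc 1 n) {x y : ℕ} (hx : x = aI D J ∨ x ∈ J ∩ U)
    (hxy : IsProper n D U x y) (hy : y ∈ J ∩ U) (hgap : ∀ u ∈ J ∩ U, ¬(x < u ∧ u < y)) :
    IsRunStart U J y := by
  obtain ⟨hyJ, hyU⟩ := mem_inter.1 hy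
  refine ⟨hyJ, hyU, fun x' hcons hx'J => ?_⟩
  obtain ⟨hx'U, -, hx'y, hnone⟩ := hcons
  have hx'x : x' ≤ x := not_lt.1 fun h => hgap x' (mem_inter.2 ⟨hx'J, hx'U⟩) ⟨h, hx'y⟩
  rcases hx with rfl | hx
  · exact (aI_lt hJ hx'J).not_ge hx'x
  · have hxU := (mem_inter.1 hx).2
    obtain rfl : x = x' := hx'x.eq_or_lt.resolve_right (fun h => hnone x hxU ⟨h, hxy.1⟩) |>.symm
    exact hxy.2.2 (Or.inr (Or.inl ⟨⟨x, hxU⟩, Or.inr (Or.inr ⟨hxU, hyU, hx'y, hnone⟩)⟩))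

theorem mem_WJ_iff (hJ : J ⊆ Icc 1 n) (p : ℕ × ℕ) :
    p ∈ WJ n D U J ↔ IsProper n D U p.1 p.2 ∧ (p.1 = aI D J ∨ p.1 ∈ J ∩ U) ∧
      (p.2 = bI n D J ∨ p.2 ∈ J ∩ U) ∧ ∀ u ∈ J ∩ U, ¬(p.1 < u ∧ u < p.2) := by
  obtain ⟨x, y⟩ := p
  rw [WJ, mem_filter, mem_product, mem_range, mem_range]
  unfold AssocDiag
  constructor
  · rintro ⟨-, ⟨-, hx, hy, hgap⟩, hxy⟩
    exact ⟨hxy, hx.imp_right fun h => mem_inter.2 ⟨h.1, h.2.1⟩,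
      hy.imp_right fun h => mem_inter.2 ⟨h.1, h.2.1⟩, hgap⟩
  · rintro ⟨hxy, hx, hy, hgap⟩
    have := hxy.1
    have := hxy.2.1
    exact ⟨⟨by omega, by omega⟩, ⟨hxy.1, hx.imp_right fun h => isRunEnd_of hJ h hxy hy hgap,
      hy.imp_right fun h => isRunStart_of hJ hx hxy h hgap, hgap⟩, hxy⟩

theorem isProper_iff {a b : ℕ} (ha : a ∈ Dbar n D) (hb : b ∈ Dbar n D) (haU : a ∉ U)
    (hbU : b ∉ U) (hbn : b ≤ n + 1) :
    IsProper n D U a b ↔ {d ∈ D | a < d ∧ d < b}.Nonempty ∧ ¬(U = ∅ ∧ a = 0 ∧ b = n + 1) := by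
  constructor
  · rintro ⟨hab, -, hnb⟩
    refine ⟨?_, fun hU => hnb (Or.inr (Or.inr hU))⟩
    by_contra hempty
    refine hnb (Or.inl ⟨ha, hb, hab, fun z hz hzab => hempty ⟨z, mem_filter.2 ⟨?_, hzab⟩⟩⟩)
    rcases mem_insert.1 hz with rfl | hz
    · omega
    rcases mem_insert.1 hz with rfl | hz
    · omega
    exact hz
  · rintro ⟨⟨d, hd⟩, hU⟩
    obtain ⟨hdD, had, hdb⟩ := mem_filter.1 hd
    refine ⟨had.trans hdb, hbn, ?_⟩
    rintro (⟨-, -, -, hgap⟩ | ⟨-, ⟨-, hbU', -⟩ | ⟨-, haU', -⟩ | ⟨haU', -⟩⟩ | hU')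
    · exact hgap d (mem_insert_of_mem (mem_insert_of_mem hdD)) ⟨had, hdb⟩
    · exact hbU hbU'
    · exact haU haU'
    · exact haU haU'
    · exact hU hU'

end Diagonals

structure IsDownUpSplit (n : ℕ) (D U : Finset ℕ) : Prop where
  union_eq : D ∪ U = Icc 1 n
  disjoint : Disjoint D U
  one_mem : 1 ∈ D
  last_mem : n ∈ D

/-- The four windows `(a, b)` with `a ≤ 1` and `n ≤ b`; as diagonals they are `δ_1, …, δ_4`. -/
def corners (n : ℕ) : Finset (ℕ × ℕ) := {0, 1} ×ˢ {n, n + 1}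

noncomputable def cornerSign (n : ℕ) (c : ℕ × ℕ) : ℝ := (-1) ^ c.1 * (-1) ^ (n + 1 - c.2)

noncomputable def nestedSet (D : Finset ℕ) (a b : ℕ) (S : Finset ℕ) : Finset ℕ :=
  {d ∈ D | a < d ∧ d < b} ∪ S

theorem mem_corners {n : ℕ} {c : ℕ × ℕ} :
    c ∈ corners n ↔ (c.1 = 0 ∨ c.1 = 1) ∧ (c.2 = n ∨ c.2 = n + 1) := by
  simp [corners]

theorem sum_cornerSign (n : ℕ) : ∑ c ∈ corners n, cornerSign n c = 0 := by
  simp [corners, cornerSign, sum_product]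

namespace IsDownUpSplit

variable {n : ℕ} {D U S : Finset ℕ} {c : ℕ × ℕ}

theorem down_subset (h : IsDownUpSplit n D U) : D ⊆ Icc 1 n :=
  h.union_eq ▸ subset_union_left

theorem up_subset (h : IsDownUpSplit n D U) : U ⊆ Icc 1 n :=
  h.union_eq ▸ subset_union_right

theorem up_subset_Ioo (h : IsDownUpSplit n D U) : U ⊆ Ioo 1 n := fun u hu => by
  have := mem_Icc.1 (h.up_subset hu)
  have h1 : u ≠ 1 := fun h1 => disjoint_left.1 h.disjoint h.one_mem (h1 ▸ hu)
  have hn : u ≠ n := fun hn => disjoint_left.1 h.disjoint h.last_mem (hn ▸ hu)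
  exact mem_Ioo.2 ⟨by omega, by omega⟩

theorem card_add_card (h : IsDownUpSplit n D U) : #D + #U = n := by
  rw [← card_union_of_disjoint h.disjoint, h.union_eq, Nat.card_Icc, Nat.add_sub_cancel]

theorem corner_notMem (h : IsDownUpSplit n D U) (hc : c ∈ corners n) : c.1 ∉ U ∧ c.2 ∉ U := by
  have := mem_corners.1 hc
  constructor <;> intro hu <;> have := mem_Ioo.1 (h.up_subset_Ioo hu) <;> omega

theorem isProper_corner_iff (h : IsDownUpSplit n D U) (hc : c ∈ corners n) :
    IsProper n D U c.1 c.2 ↔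
      {d ∈ D | c.1 < d ∧ d < c.2}.Nonempty ∧ ¬(U = ∅ ∧ c.1 = 0 ∧ c.2 = n + 1) := by
  obtain ⟨ha, hb⟩ := mem_corners.1 hc
  refine isProper_iff ?_ ?_ (h.corner_notMem hc).1 (h.corner_notMem hc).2 (by omega)
  · rcases ha with ha | ha <;> simp [Dbar, ha, h.one_mem]
  · rcases hb with hb | hb <;> simp [Dbar, hb, h.last_mem]

theorem mem_nestedSet_bounds (h : IsDownUpSplit n D U) (hc : c ∈ corners n) (hS : S ⊆ U)
    {i : ℕ} (hi : i ∈ nestedSet D c.1 c.2 S) : c.1 < i ∧ i < c.2 := by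
  rcases mem_union.1 hi with hi | hi
  · exact (mem_filter.1 hi).2
  · have := mem_Ioo.1 (h.up_subset_Ioo (hS hi))
    have := mem_corners.1 hc
    omega

theorem nestedSet_subset (h : IsDownUpSplit n D U) (hS : S ⊆ U) (a b : ℕ) :
    nestedSet D a b S ⊆ Icc 1 n :=
  union_subset ((filter_subset _ _).trans h.down_subset) (hS.trans h.up_subset)

theorem nestedSet_inter_up (h : IsDownUpSplit n D U) (hS : S ⊆ U) (a b : ℕ) :
    nestedSet D a b S ∩ U = S := by
  rw [nestedSet, union_inter_distrib_right, inter_eq_left.2 hS,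
    disjoint_iff_inter_eq_empty.1 (disjoint_of_subset_left (filter_subset _ _) h.disjoint),
    empty_union]

theorem aI_nestedSet (h : IsDownUpSplit n D U) (hc : c ∈ corners n) (hS : S ⊆ U)
    (hne : (nestedSet D c.1 c.2 S).Nonempty) : aI D (nestedSet D c.1 c.2 S) = c.1 := by
  refine aI_eq_of ?_ (h.nestedSet_subset hS _ _) hne (fun i hi => h.mem_nestedSet_bounds hc hS hi)
    fun d hd had hdb => mem_union_left _ (mem_filter.2 ⟨hd, had, hdb⟩)
  rcases (mem_corners.1 hc).1 with ha | ha <;> simp [ha, h.one_mem]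

theorem bI_nestedSet (h : IsDownUpSplit n D U) (hc : c ∈ corners n) (hS : S ⊆ U)
    (hne : (nestedSet D c.1 c.2 S).Nonempty) : bI n D (nestedSet D c.1 c.2 S) = c.2 := by
  have hb := (mem_corners.1 hc).2
  refine bI_eq_of ?_ (by omega) (h.nestedSet_subset hS _ _) hne
    (fun i hi => h.mem_nestedSet_bounds hc hS hi)
    fun d hd had hdb => mem_union_left _ (mem_filter.2 ⟨hd, had, hdb⟩)
  rcases hb with hb | hb <;> simp [hb, h.last_mem]

theorem isNested_nestedSet (h : IsDownUpSplit n D U) (hc : c ∈ corners n) (hS : S ⊆ U)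
    (hne : (nestedSet D c.1 c.2 S).Nonempty) : IsNested n D (nestedSet D c.1 c.2 S) := by
  refine ⟨hne, h.nestedSet_subset hS _ _, fun d hd had hdb => ?_⟩
  rw [h.aI_nestedSet hc hS hne] at had
  rw [h.bI_nestedSet hc hS hne] at hdb
  exact mem_union_left _ (mem_filter.2 ⟨hd, had, hdb⟩)

theorem eq_nestedSet_of_window (h : IsDownUpSplit n D U) {K : Finset ℕ} (hK : IsNested n D K)
    (hwin : Icc 1 n ⊆ Icc (aI D K) (bI n D K)) :
    (aI D K, bI n D K) ∈ corners n ∧ K = nestedSet D (aI D K) (bI n D K) (K ∩ U) := by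
  have hKn := hK.2.1
  have h1n : 1 ≤ n := (mem_Icc.1 (h.down_subset h.one_mem)).2
  obtain ⟨ha1, hnb⟩ := Icc_subset_Icc_iff h1n |>.1 hwin
  have hbn : bI n D K ≤ n + 1 :=
    bI_le (mem_insert_self _ _) fun i hi => Nat.lt_succ_of_le (mem_Icc.1 (hKn hi)).2
  refine ⟨mem_corners.2 ⟨by omega, by omega⟩, subset_antisymm (fun i hi => ?_) ?_⟩
  · rcases mem_union.1 (h.union_eq ▸ hKn hi) with hiD | hiU
    · exact mem_union_left _ (mem_filter.2 ⟨hiD, aI_lt hKn hi, lt_bI hKn hi⟩)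
    · exact mem_union_right _ (mem_inter.2 ⟨hi, hiU⟩)
  · refine union_subset (fun d hd => ?_) inter_subset_left
    obtain ⟨hdD, had, hdb⟩ := mem_filter.1 hd
    exact hK.2.2 d hdD had hdb

theorem sum_window_eq_sum_corners (h : IsDownUpSplit n D U) {M : Type*} [AddCommMonoid M]
    (f : Finset ℕ → M) :
    ∑ K ∈ (Icc 1 n).powerset with IsNested n D K ∧ Icc 1 n ⊆ Icc (aI D K) (bI n D K), f K =
      ∑ c ∈ corners n, ∑ S ∈ U.powerset,
        if (nestedSet D c.1 c.2 S).Nonempty then f (nestedSet D c.1 c.2 S) else 0 := by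
  trans ∑ q ∈ corners n ×ˢ U.powerset with (nestedSet D q.1.1 q.1.2 q.2).Nonempty,
    f (nestedSet D q.1.1 q.1.2 q.2)
  swap
  · rw [sum_filter, sum_product]
  refine sum_nbij' (fun K => ((aI D K, bI n D K), K ∩ U)) (fun q => nestedSet D q.1.1 q.1.2 q.2)
    ?_ ?_ ?_ ?_ ?_
  · intro K hK
    obtain ⟨-, hK, hwin⟩ := mem_filter.1 hK
    obtain ⟨hc, hKeq⟩ := h.eq_nestedSet_of_window hK hwin
    exact mem_filter.2 ⟨mem_product.2 ⟨hc, mem_powerset.2 inter_subset_right⟩, hKeq ▸ hK.1⟩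
  · rintro ⟨c, S⟩ hq
    obtain ⟨hcS, hne⟩ := mem_filter.1 hq
    obtain ⟨hc, hS⟩ := mem_product.1 hcS
    replace hS := mem_powerset.1 hS
    refine mem_filter.2 ⟨mem_powerset.2 (h.nestedSet_subset hS _ _),
      h.isNested_nestedSet hc hS hne, ?_⟩
    have := mem_corners.1 hc
    rw [h.aI_nestedSet hc hS hne, h.bI_nestedSet hc hS hne]
    exact Icc_subset_Icc (by omega) (by omega)
  · intro K hK
    obtain ⟨-, hK, hwin⟩ := mem_filter.1 hK
    exact (h.eq_nestedSet_of_window hK hwin).2.symm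
  · rintro ⟨c, S⟩ hq
    obtain ⟨hcS, hne⟩ := mem_filter.1 hq
    obtain ⟨hc, hS⟩ := mem_product.1 hcS
    replace hS := mem_powerset.1 hS
    simp only [h.aI_nestedSet hc hS hne, h.bI_nestedSet hc hS hne, h.nestedSet_inter_up hS]
  · intro K hK
    obtain ⟨-, hK, hwin⟩ := mem_filter.1 hK
    have hKeq := (h.eq_nestedSet_of_window hK hwin).2
    simp only [← hKeq]

theorem card_filter_corner (h : IsDownUpSplit n D U) (hn : 2 ≤ n) (hc : c ∈ corners n) :
    #{d ∈ D | c.1 < d ∧ d < c.2} + c.1 + (n + 1 - c.2) = #D := by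
  have hD : ∀ d ∈ D, 1 ≤ d ∧ d ≤ n := fun d hd => mem_Icc.1 (h.down_subset hd)
  have hfilter : {d ∈ D | c.1 < d ∧ d < c.2} = D \ {c.1, c.2} := by
    have := mem_corners.1 hc
    ext d
    by_cases hd : d ∈ D
    · have := hD d hd
      simp only [mem_filter, mem_sdiff, mem_insert, mem_singleton, hd, true_and]
      omega
    · simp [hd]
  have hinter : #(D ∩ {c.1, c.2}) = c.1 + (n + 1 - c.2) := by
    have h0 : 0 ∉ D := fun h0 => by have := hD 0 h0; omega
    have hn1 : n + 1 ∉ D := fun hn1 => by have := hD _ hn1; omega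
    have h1n : 1 ≠ n := by omega
    obtain ⟨a, b⟩ := c
    obtain ⟨ha, hb⟩ := mem_corners.1 hc
    dsimp only at ha hb ⊢
    rcases ha with rfl | rfl <;> rcases hb with rfl | rfl <;>
      simp [inter_insert_of_mem, inter_insert_of_notMem, h0, hn1, h.one_mem, h.last_mem,
        card_pair h1n]
  rw [hfilter, add_assoc, ← hinter, card_sdiff_add_card_inter]

theorem neg_one_pow_card_sdiff_nestedSet (h : IsDownUpSplit n D U) (hn : 2 ≤ n)
    (hc : c ∈ corners n) (hS : S ⊆ U) :
    (-1 : ℝ) ^ #(Icc 1 n \ nestedSet D c.1 c.2 S) = (-1) ^ #U * cornerSign n c * (-1) ^ #S := by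
  have hK := card_sdiff_add_card_eq_card (h.nestedSet_subset hS c.1 c.2)
  have hKS : #(nestedSet D c.1 c.2 S) = #{d ∈ D | c.1 < d ∧ d < c.2} + #S :=
    card_union_of_disjoint (disjoint_of_subset_left (filter_subset _ _)
      (disjoint_of_subset_right hS h.disjoint))
  have key : #(Icc 1 n \ nestedSet D c.1 c.2 S) + #S = #U + c.1 + (n + 1 - c.2) := by
    have := h.card_filter_corner hn hc
    have := h.card_add_card
    rw [Nat.card_Icc] at hK
    omega
  calc (-1 : ℝ) ^ #(Icc 1 n \ nestedSet D c.1 c.2 S)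
      = (-1) ^ (#(Icc 1 n \ nestedSet D c.1 c.2 S) + #S) * (-1) ^ #S := by
        rw [pow_add, mul_assoc, ← pow_add, ← two_mul, pow_mul, neg_one_sq, one_pow, mul_one]
    _ = (-1) ^ #U * cornerSign n c * (-1) ^ #S := by
        rw [key, pow_add, pow_add, cornerSign, mul_assoc ((-1 : ℝ) ^ #U)]

/-- The signed sum over the corners kills every term that depends on at most one coordinate
of the corner. -/
theorem sum_cornerSign_mul_ite (h : IsDownUpSplit n D U) (hS : S ⊆ U) (p : ℕ × ℕ) (Q : Prop)
    [Decidable Q] (x : ℝ) :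
    ∑ c ∈ corners n, cornerSign n c *
        (if Q ∧ (p.1 = c.1 ∨ p.1 ∈ S) ∧ (p.2 = c.2 ∨ p.2 ∈ S) then x else 0) =
      if Q ∧ p ∈ corners n then cornerSign n p * x else 0 := by
  by_cases hQ : Q
  swap
  · simp [hQ]
  have hfst : p.1 ∈ S → p.1 ∉ ({0, 1} : Finset ℕ) := fun hp => by
    have := mem_Ioo.1 (h.up_subset_Ioo (hS hp))
    simp only [mem_insert, mem_singleton]
    omega
  have hsnd : p.2 ∈ S → p.2 ∉ ({n, n + 1} : Finset ℕ) := fun hp => by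
    have := mem_Ioo.1 (h.up_subset_Ioo (hS hp))
    simp only [mem_insert, mem_singleton]
    omega
  calc ∑ c ∈ corners n, cornerSign n c *
        (if Q ∧ (p.1 = c.1 ∨ p.1 ∈ S) ∧ (p.2 = c.2 ∨ p.2 ∈ S) then x else 0)
      = (∑ a ∈ {0, 1}, (-1 : ℝ) ^ a * (if p.1 = a ∨ p.1 ∈ S then 1 else 0)) *
          (∑ b ∈ {n, n + 1}, (-1 : ℝ) ^ (n + 1 - b) * (if p.2 = b ∨ p.2 ∈ S then 1 else 0)) *
          x := by
        rw [sum_mul_sum, sum_mul, corners, sum_product]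
        refine sum_congr rfl fun a _ => ?_
        rw [sum_mul]
        refine sum_congr rfl fun b _ => ?_
        simp only [cornerSign, hQ, true_and]
        split_ifs <;> simp_all
    _ = (if p.1 ∈ ({0, 1} : Finset ℕ) then (-1 : ℝ) ^ p.1 else 0) *
          (if p.2 ∈ ({n, n + 1} : Finset ℕ) then (-1 : ℝ) ^ (n + 1 - p.2) else 0) * x := by
        rw [sum_mul_ite_eq_or_of_sum_eq_zero (f := fun a => (-1 : ℝ) ^ a) (by simp) hfst,
          sum_mul_ite_eq_or_of_sum_eq_zero (f := fun b => (-1 : ℝ) ^ (n + 1 - b)) (by simp)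
            hsnd]
    _ = if Q ∧ p ∈ corners n then cornerSign n p * x else 0 := by
        simp only [hQ, true_and, corners, mem_product, cornerSign]
        split_ifs <;> simp_all

theorem nonempty_and_mem_WJ_iff (h : IsDownUpSplit n D U) (hc : c ∈ corners n) (hS : S ⊆ U)
    (p : ℕ × ℕ) :
    ((nestedSet D c.1 c.2 S).Nonempty ∧ p ∈ WJ n D U (nestedSet D c.1 c.2 S)) ↔
      (IsProper n D U p.1 p.2 ∧ ∀ u ∈ S, ¬(p.1 < u ∧ u < p.2)) ∧
        (p.1 = c.1 ∨ p.1 ∈ S) ∧ (p.2 = c.2 ∨ p.2 ∈ S) := by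
  have hsub := h.nestedSet_subset hS c.1 c.2
  constructor
  · rintro ⟨hne, hp⟩
    rw [mem_WJ_iff hsub, h.aI_nestedSet hc hS hne, h.bI_nestedSet hc hS hne,
      h.nestedSet_inter_up hS] at hp
    exact ⟨⟨hp.1, hp.2.2.2⟩, hp.2.1, hp.2.2.1⟩
  · rintro ⟨⟨hP, hgap⟩, hx, hy⟩
    have hne : (nestedSet D c.1 c.2 S).Nonempty := by
      rcases hx with hx | hx
      · rcases hy with hy | hy
        · rw [hx, hy] at hP
          exact ((h.isProper_corner_iff hc).1 hP).1.mono subset_union_left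
        · exact ⟨_, mem_union_right _ hy⟩
      · exact ⟨_, mem_union_right _ hx⟩
    refine ⟨hne, ?_⟩
    rw [mem_WJ_iff hsub, h.aI_nestedSet hc hS hne, h.bI_nestedSet hc hS hne,
      h.nestedSet_inter_up hS]
    exact ⟨hP, hx, hy, hgap⟩

end IsDownUpSplit

namespace IsDownUpSplit

variable {n : ℕ} {D U S : Finset ℕ} {c : ℕ × ℕ} {w : ℕ × ℕ → ℝ} {zn : ℝ}

theorem ite_nonempty_componentValue (h : IsDownUpSplit n D U) (hc : c ∈ corners n)
    (hS : S ⊆ U) :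
    (if (nestedSet D c.1 c.2 S).Nonempty then
        componentValue n D U w zn (nestedSet D c.1 c.2 S) else 0) =
      (if S.Nonempty ∨ {d ∈ D | c.1 < d ∧ d < c.2}.Nonempty then zn else 0) +
        ∑ p ∈ range (n + 2) ×ˢ range (n + 2),
          if (IsProper n D U p.1 p.2 ∧ ∀ u ∈ S, ¬(p.1 < u ∧ u < p.2)) ∧
              (p.1 = c.1 ∨ p.1 ∈ S) ∧ (p.2 = c.2 ∨ p.2 ∈ S) then w p - zn else 0 := by
  have hne : (nestedSet D c.1 c.2 S).Nonempty ↔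
      S.Nonempty ∨ {d ∈ D | c.1 < d ∧ d < c.2}.Nonempty := by
    rw [nestedSet, union_nonempty, or_comm]
  simp_rw [← h.nonempty_and_mem_WJ_iff hc hS, ← hne]
  split_ifs with hK
  · simp [componentValue_eq, hK]
  · simp [hK]

theorem ite_add_ite_eq_zext (h : IsDownUpSplit n D U) (hc : c ∈ corners n) :
    (if {d ∈ D | c.1 < d ∧ d < c.2}.Nonempty then zn else 0) +
        (if IsProper n D U c.1 c.2 then w c - zn else 0) = zext n D U w zn c.1 c.2 := by
  have hfull : c.1 = 0 ∧ c.2 = n + 1 → {d ∈ D | c.1 < d ∧ d < c.2}.Nonempty := fun hc' =>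
    ⟨1, mem_filter.2 ⟨h.one_mem, by have := mem_Icc.1 (h.down_subset h.one_mem); omega⟩⟩
  obtain ⟨hU1, hU2⟩ := h.corner_notMem hc
  rw [zext, h.isProper_corner_iff hc]
  by_cases hD : {d ∈ D | c.1 < d ∧ d < c.2}.Nonempty <;>
    by_cases hU : U = ∅ ∧ c.1 = 0 ∧ c.2 = n + 1
  · obtain ⟨hU0, ha, hb⟩ := hU
    simp only [ha, hb] at hD ⊢
    simp only [hD, hU0, and_self, not_true_eq_false, and_false, if_true, if_false, add_zero]
  · simp only [hD, hU, not_false_eq_true, and_self, if_true, Prod.mk.eta]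
    ring
  · exact absurd (hfull ⟨hU.2.1, hU.2.2⟩) hD
  · simp only [hD, hU, hU1, hU2, false_and, or_self, if_false, add_zero]

theorem sum_cornerSign_mul_componentValue (h : IsDownUpSplit n D U) (hS : S ⊆ U) :
    ∑ c ∈ corners n, cornerSign n c *
        (if (nestedSet D c.1 c.2 S).Nonempty then
          componentValue n D U w zn (nestedSet D c.1 c.2 S) else 0) =
      if S = ∅ then ∑ c ∈ corners n, cornerSign n c * zext n D U w zn c.1 c.2 else 0 := by
  set A : ℕ × ℕ → Prop := fun p => IsProper n D U p.1 p.2 ∧ ∀ u ∈ S, ¬(p.1 < u ∧ u < p.2)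
  have hcorners : corners n ⊆ range (n + 2) ×ˢ range (n + 2) := fun p hp => by
    have := mem_corners.1 hp
    simp only [mem_product, mem_range]
    omega
  have hA : ∀ c ∈ corners n, A c ↔ IsProper n D U c.1 c.2 ∧ S = ∅ := fun c hc =>
    and_congr_right' ⟨fun hgap => eq_empty_of_forall_notMem fun u hu =>
      hgap u hu (h.mem_nestedSet_bounds hc hS (mem_union_right _ hu)),
      fun hS0 u hu => absurd hu (hS0 ▸ notMem_empty u)⟩
  calc _ = ∑ c ∈ corners n, cornerSign n c *
          (if S.Nonempty ∨ {d ∈ D | c.1 < d ∧ d < c.2}.Nonempty then zn else 0) +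
        ∑ p ∈ range (n + 2) ×ˢ range (n + 2), ∑ c ∈ corners n, cornerSign n c *
          (if A p ∧ (p.1 = c.1 ∨ p.1 ∈ S) ∧ (p.2 = c.2 ∨ p.2 ∈ S) then w p - zn else 0) := by
        rw [sum_comm, ← sum_add_distrib]
        refine sum_congr rfl fun c hc => ?_
        rw [h.ite_nonempty_componentValue hc hS, mul_add, mul_sum]
    _ = (if S.Nonempty then 0 else ∑ c ∈ corners n, cornerSign n c *
          (if {d ∈ D | c.1 < d ∧ d < c.2}.Nonempty then zn else 0)) +
        ∑ c ∈ corners n, cornerSign n c * (if A c then w c - zn else 0) := by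
        rw [sum_mul_ite_or_of_sum_eq_zero (sum_cornerSign n)]
        congr 1
        simp_rw [h.sum_cornerSign_mul_ite hS]
        rw [← sum_subset hcorners fun p _ hp => by simp [hp]]
        exact sum_congr rfl fun c hc => by simp [hc, mul_ite]
    _ = _ := by
        by_cases hS0 : S = ∅
        · rw [if_neg (by simp [hS0]), if_pos hS0, ← sum_add_distrib]
          refine sum_congr rfl fun c hc => ?_
          rw [← mul_add, ← h.ite_add_ite_eq_zext hc]
          simp only [hA c hc, hS0, and_true]
        · rw [if_pos (nonempty_iff_ne_empty.2 hS0), zero_add, if_neg hS0]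
          exact sum_eq_zero fun c hc => by simp [hA c hc, hS0]

theorem yI_eq_sum_corners (h : IsDownUpSplit n D U) (hn : 2 ≤ n) :
    yI n D U w zn (Icc 1 n) =
      (-1) ^ #U * ∑ c ∈ corners n, cornerSign n c * zext n D U w zn c.1 c.2 := by
  rw [yI_eq_sum_window, h.sum_window_eq_sum_corners]
  calc _ = (-1) ^ #U * ∑ S ∈ U.powerset, (-1) ^ #S * ∑ c ∈ corners n, cornerSign n c *
          (if (nestedSet D c.1 c.2 S).Nonempty then
            componentValue n D U w zn (nestedSet D c.1 c.2 S) else 0) := by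
        rw [sum_comm, mul_sum]
        refine sum_congr rfl fun S hS => ?_
        rw [mul_sum, mul_sum]
        refine sum_congr rfl fun c hc => ?_
        rw [h.neg_one_pow_card_sdiff_nestedSet hn hc (mem_powerset.1 hS)]
        split_ifs <;> ring
    _ = _ := by
        rw [sum_congr rfl fun S hS =>
          congrArg _ (h.sum_cornerSign_mul_componentValue (mem_powerset.1 hS))]
        simp_rw [mul_ite, mul_zero]
        rw [sum_ite_eq' _ _ _, if_pos (empty_mem_powerset U), card_empty, pow_zero, one_mul]

theorem card_sdiff_Rext (h : IsDownUpSplit n D U) : #(Icc 1 n \ Rext n D U 0 (n + 1)) = #U := by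
  have hc : (0, n + 1) ∈ corners n := mem_corners.2 ⟨Or.inl rfl, Or.inr rfl⟩
  have hD : {d ∈ D | 0 < d ∧ d < n + 1} = D := filter_true_of_mem fun d hd => by
    have := mem_Icc.1 (h.down_subset hd)
    omega
  have hP := h.isProper_corner_iff hc
  dsimp only at hP
  rw [hD] at hP
  by_cases hU : U = ∅
  · rw [Rext, if_neg fun h' => (hP.1 h').2 ⟨hU, rfl, rfl⟩, if_pos ⟨hU, rfl, rfl⟩, sdiff_self, hU]
    rfl
  · rw [Rext, if_pos (hP.2 ⟨⟨1, h.one_mem⟩, fun h' => hU h'.1⟩), Rdiag,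
      if_neg (h.corner_notMem hc).1, if_neg (h.corner_notMem hc).2, hD, ← h.union_eq,
      union_sdiff_cancel_left h.disjoint]

end IsDownUpSplit

/-- for any right-hand sides,
`y_{[n]} = (−1)^{|[n]∖R_{δ_1}|}(z_{R_{δ_1}} − z_{R_{δ_2}} − z_{R_{δ_3}} + z_{R_{δ_4}})`
with `δ_1 = {0,n+1}`, `δ_2 = {0,n}`, `δ_3 = {1,n+1}`, `δ_4 = {1,n}` and the
extended `R` and `z`. -/
theorem statement13 (n : ℕ) (D U : Finset ℕ) (hn : 2 ≤ n)
    (hDU : D ∪ U = Finset.Icc 1 n) (hdisj : Disjoint D U) (h1D : 1 ∈ D) (hnD : n ∈ D)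
    (w : ℕ × ℕ → ℝ) (zn : ℝ) :
    yI n D U w zn (Finset.Icc 1 n) =
      (-1 : ℝ) ^ (Finset.Icc 1 n \ Rext n D U 0 (n + 1)).card *
        (zext n D U w zn 0 (n + 1) - zext n D U w zn 0 n
          - zext n D U w zn 1 (n + 1) + zext n D U w zn 1 n) := by
  have h : IsDownUpSplit n D U := ⟨hDU, hdisj, h1D, hnD⟩
  rw [h.yI_eq_sum_corners hn, h.card_sdiff_Rext]
  simp [corners, cornerSign, sum_product]
  ring

end AssocPaper
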